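/- Let κ be an uncountable regular cardinal with κ^{<κ}=κ, and let λ be a regular cardinal with κ < λ ≤ 2^κ. If L ⊆ 2^κ is a λ-κ-Lusin set, then |L| ≤ cov(M_κ). -/

import Mathlib

noncomputable section

open Cardinal Set

namespace GenSp

/-- The index set: a canonical type of order type `κ.ord`. -/
abbrev I (κ : Cardinal.{0}) : Type := κ.ord.ToType

variable (κ : Cardinal.{0}) (A : Type)

/-- The generalized space `A^κ`. -/
abbrev Sp : Type := I κ → A

/-- The basic clopen set `[x ↾ ξ]`: all functions agreeing with `x` below `ξ`. -/
def cyl (x : Sp κ A) (ξ : I κ) : Set (Sp κ A) := {y | ∀ β < ξ, y β = x β}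

/-- The bounded topology on `A^κ`, generated by the basic clopen sets. -/
def bt : TopologicalSpace (Sp κ A) :=
  .generateFrom {S | ∃ x ξ, S = cyl κ A x ξ}

/-- Open in the bounded topology. -/
def OpenK (s : Set (Sp κ A)) : Prop := @IsOpen _ (bt κ A) s

/-- Closed in the bounded topology. -/
def ClosedK (s : Set (Sp κ A)) : Prop := @IsClosed _ (bt κ A) s

/-- Nowhere dense in the bounded topology. -/
def NwdK (s : Set (Sp κ A)) : Prop := @IsNowhereDense _ (bt κ A) s

/-- κ-meagre: a union of (at most) κ nowhere dense sets. -/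
def MeagreK (s : Set (Sp κ A)) : Prop :=
  ∃ f : I κ → Set (Sp κ A), (∀ i, NwdK κ A (f i)) ∧ s = ⋃ i, f i

/-- κ-strongly null set. -/
def SNullK (S : Set (Sp κ A)) : Prop :=
  ∀ ξ : I κ → I κ, ∃ a : I κ → Sp κ A, S ⊆ ⋃ α, cyl κ A (a α) (ξ α)

/-- Coordinatewise addition over `ℤ₂` (translation by `x`). -/
def xadd (x y : Sp κ Bool) : Sp κ Bool := fun i => xor (x i) (y i)

/-- The covering number of the κ-meagre ideal. -/
def covM : Cardinal :=
  sInf {c | ∃ 𝒜 : Set (Set (Sp κ A)), #𝒜 = c ∧ (∀ s ∈ 𝒜, MeagreK κ A s) ∧ ⋃₀ 𝒜 = Set.univ}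

/-- The cofinality of the κ-meagre ideal. -/
def cofM : Cardinal :=
  sInf {c | ∃ 𝒜 : Set (Set (Sp κ A)), #𝒜 = c ∧ (∀ s ∈ 𝒜, MeagreK κ A s) ∧
    ∀ t, MeagreK κ A t → ∃ s ∈ 𝒜, t ⊆ s}

/-- κ is weakly compact: uncountable and with the partition property κ → (κ)²₂. -/
def IsWeaklyCompact (κ : Cardinal.{0}) : Prop :=
  ℵ₀ < κ ∧ ∀ c : I κ → I κ → Bool, ∃ H : Set (I κ), #H = κ ∧
    ∃ b : Bool, ∀ i ∈ H, ∀ j ∈ H, i < j → c i j = b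

/-- `S` is κ-meagre relative to `P` (in the subspace topology). -/
def MeagreInK (P S : Set (Sp κ A)) : Prop :=
  ∃ f : I κ → Set P,
    (∀ i, @IsNowhereDense _ (TopologicalSpace.induced Subtype.val (bt κ A)) (f i)) ∧
    {x : P | (x : Sp κ A) ∈ S} = ⋃ i, f i

/-- Perfect set in the bounded topology. -/
def PerfK (P : Set (Sp κ A)) : Prop := @Perfect _ (bt κ A) P

/-- Perfectly κ-meagre set. -/
def PMeagreK (S : Set (Sp κ A)) : Prop := ∀ P, PerfK κ A P → MeagreInK κ A P S

/-- κ-λ-set. -/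
def KLambdaSet (S : Set (Sp κ A)) : Prop :=
  ∀ B ⊆ S, #B ≤ κ → ∃ G : I κ → Set (Sp κ A),
    (∀ i, OpenK κ A (G i)) ∧ (⋂ i, G i) ∩ S = B

/-- κ-σ-set. -/
def KSigmaSet (S : Set (Sp κ A)) : Prop :=
  ∀ F : I κ → Set (Sp κ A), (∀ i, ClosedK κ A (F i)) →
    ∃ G : I κ → Set (Sp κ A), (∀ i, OpenK κ A (G i)) ∧
      S ∩ (⋃ i, F i) = S ∩ (⋂ i, G i)

/-- κ-γ-set: every open (proper) κ-cover contains a κ-γ-subcover of size κ. -/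
def KGammaSet (X : Set (Sp κ A)) : Prop :=
  ∀ 𝒰 : Set (Set (Sp κ A)), (∀ U ∈ 𝒰, OpenK κ A U) → X ∉ 𝒰 →
    (∀ C ⊆ X, #C < κ → ∃ U ∈ 𝒰, C ⊆ U) →
    ∃ U : I κ → Set (Sp κ A), (∀ α, U α ∈ 𝒰) ∧
      X ⊆ ⋃ α, ⋂ β, ⋂ (_ : α < β), U β

/-- A (proper) open cover of `X` of size κ, indexed by `I κ`. -/
def IsOCovSeq (X : Set (Sp κ A)) (U : I κ → Set (Sp κ A)) : Prop :=
  (∀ α, OpenK κ A (U α)) ∧ (∀ α, U α ≠ X) ∧ X ⊆ ⋃ α, U α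

/-- A (proper) κ-γ-cover of `X`, indexed by `I κ`. -/
def IsGammaCovSeq (X : Set (Sp κ A)) (U : I κ → Set (Sp κ A)) : Prop :=
  (∀ α, OpenK κ A (U α)) ∧ (∀ α, U α ≠ X) ∧
    X ⊆ ⋃ α, ⋂ β, ⋂ (_ : α < β), U β

/-- The cover `U` is essentially of size κ: no subfamily of size `< κ` covers `X`. -/
def EssK (X : Set (Sp κ A)) (U : I κ → Set (Sp κ A)) : Prop :=
  ∀ s : Set (I κ), #s < κ → ¬ X ⊆ ⋃ β ∈ s, U β

/-- The selection principle `S₁^κ(Γ_κ, Γ_κ)`. -/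
def S1GammaGamma (X : Set (Sp κ A)) : Prop :=
  ∀ 𝒰 : I κ → I κ → Set (Sp κ A), (∀ α, IsGammaCovSeq κ A X (𝒰 α)) →
    ∃ f : I κ → I κ, IsGammaCovSeq κ A X (fun α => 𝒰 α (f α))

/-- The κ-Hurewicz property `U^κ_{<κ}(O_κ, Γ_κ)`. -/
def KHurewicz (X : Set (Sp κ A)) : Prop :=
  ∀ 𝒰 : I κ → I κ → Set (Sp κ A), (∀ α, IsOCovSeq κ A X (𝒰 α)) →
    (∀ α, EssK κ A X (𝒰 α)) →
    ∃ V : I κ → Set (I κ), (∀ α, #(V α) < κ) ∧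
      IsGammaCovSeq κ A X (fun α => ⋃ β ∈ V α, 𝒰 α β)

/-- The κ-Menger property `U^κ_{<κ}(O_κ, O_κ)`. -/
def KMenger (X : Set (Sp κ A)) : Prop :=
  ∀ 𝒰 : I κ → I κ → Set (Sp κ A), (∀ α, IsOCovSeq κ A X (𝒰 α)) →
    (∀ α, EssK κ A X (𝒰 α)) →
    ∃ V : I κ → Set (I κ), (∀ α, #(V α) < κ) ∧
      IsOCovSeq κ A X (fun α => ⋃ β ∈ V α, 𝒰 α β)

/-- The κ-Rothberger property `S₁^κ(O_κ, O_κ)`. -/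
def KRothberger (X : Set (Sp κ A)) : Prop :=
  ∀ 𝒰 : I κ → I κ → Set (Sp κ A), (∀ α, IsOCovSeq κ A X (𝒰 α)) →
    ∃ f : I κ → I κ, IsOCovSeq κ A X (fun α => 𝒰 α (f α))

/-- Closed unbounded subset of `I κ`. -/
def IsClubK (S : Set (I κ)) : Prop :=
  (∀ a : I κ, ∃ b ∈ S, a < b) ∧
  (∀ a : I κ, (∃ b, b < a) → (∀ b < a, ∃ c ∈ S, b < c ∧ c < a) → a ∈ S)

/-- Stationary subset of `I κ`. -/
def IsStatK (S : Set (I κ)) : Prop :=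
  ∀ C : Set (I κ), IsClubK κ C → (S ∩ C).Nonempty

/-- The diamond principle `◇_κ(E)`. -/
def DiamondK (E : Set (I κ)) : Prop :=
  ∃ s : I κ → Set (I κ), (∀ α, s α ⊆ Iio α) ∧
    ∀ X : Set (I κ), IsStatK κ {α | α ∈ E ∧ X ∩ Iio α = s α}

/-- The guessing principle `◇_κ(E, 2^κ, NS_κ)`. -/
def DiamondFunK (E : Set (I κ)) : Prop :=
  ∃ s : I κ → Sp κ Bool,
    ∀ x : Sp κ Bool, IsStatK κ {α | α ∈ E ∧ ∀ β < α, x β = s α β}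

/-- `S` is `X`-small. -/
def XSmall (X : Set (I κ)) (S : Set (Sp κ A)) : Prop :=
  ∃ a : I κ → Sp κ A, S ⊆ ⋃ α ∈ X, cyl κ A (a α) α

/-- `S` is small in `A^κ`. -/
def SmallK (S : Set (Sp κ A)) : Prop :=
  ∃ lam : Cardinal, lam < κ ∧ ∀ α : I κ, ∃ T : Set (Sp κ A),
    #T ≤ lam ∧ S ⊆ ⋃ x ∈ T, cyl κ A x α

/-!
Singletons are κ-meagre, since the bounded topology is T₁ and has no isolated points, so
`2^κ` is covered by `cov(M_κ)` κ-meagre sets. Each of them meets `L` in fewer than `λ` points;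
as `λ` is regular and `λ ≤ |L|`, the cover has at least `λ` members, and then
`|L| ≤ cov(M_κ) · λ = cov(M_κ)`.
-/

universe u

theorem _root_.Cardinal.mk_le_mk_of_subset_iUnion_of_mk_inter_lt {α ι : Type u} {lam : Cardinal}
    (hlam : lam.IsRegular) {L : Set α} (hL : lam ≤ #L) (f : ι → Set α) (hcover : L ⊆ ⋃ i, f i)
    (hsmall : ∀ i, #(L ∩ f i : Set α) < lam) : #L ≤ #ι := by
  have hsum : #L ≤ sum fun i => #(L ∩ f i : Set α) :=
    calc #L = #(⋃ i, L ∩ f i : Set α) := by rw [← inter_iUnion, inter_eq_left.2 hcover]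
      _ ≤ _ := mk_iUnion_le_sum_mk
  have hι : lam ≤ #ι := by
    by_contra! h
    exact (hL.trans hsum).not_gt (sum_lt_of_isRegular hlam h hsmall)
  calc #L ≤ sum fun _ : ι => lam := hsum.trans (sum_le_sum _ _ fun i => (hsmall i).le)
    _ = #ι * lam := sum_const' _ _
    _ = #ι := mul_eq_left (hlam.aleph0_le.trans hι) hι hlam.ne_zero

variable {κ A}

theorem nonempty_I (hκ : ℵ₀ ≤ κ) : Nonempty (I κ) := by
  rw [Ordinal.nonempty_toType_iff, ne_eq, ord_eq_zero]
  exact (aleph0_pos.trans_le hκ).ne'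

theorem cyl_openK (x : Sp κ A) (ξ : I κ) : OpenK κ A (cyl κ A x ξ) :=
  .basic _ ⟨x, ξ, rfl⟩

theorem mem_cyl_self (x : Sp κ A) (ξ : I κ) : x ∈ cyl κ A x ξ := fun _ _ => rfl

theorem cyl_subset_of_mem {x y : Sp κ A} {ξ ζ : I κ} (hy : y ∈ cyl κ A x ξ) (hζ : ξ ≤ ζ) :
    cyl κ A y ζ ⊆ cyl κ A x ξ :=
  fun _ hz β hβ => (hz β (hβ.trans_le hζ)).trans (hy β hβ)

theorem OpenK.exists_cyl_subset (hκ : ℵ₀ ≤ κ) {U : Set (Sp κ A)} (hU : OpenK κ A U)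
    {x : Sp κ A} (hx : x ∈ U) : ∃ ξ, cyl κ A x ξ ⊆ U := by
  induction hU with
  | basic S hS =>
    obtain ⟨z, ξ, rfl⟩ := hS
    exact ⟨ξ, cyl_subset_of_mem hx le_rfl⟩
  | univ =>
    obtain ⟨ξ⟩ := nonempty_I hκ
    exact ⟨ξ, subset_univ _⟩
  | inter s t _ _ ihs iht =>
    obtain ⟨ξ₁, h₁⟩ := ihs hx.1
    obtain ⟨ξ₂, h₂⟩ := iht hx.2
    exact ⟨max ξ₁ ξ₂, subset_inter
      ((cyl_subset_of_mem (mem_cyl_self x ξ₁) (le_max_left _ _)).trans h₁)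
      ((cyl_subset_of_mem (mem_cyl_self x ξ₂) (le_max_right _ _)).trans h₂)⟩
  | sUnion S _ ih =>
    obtain ⟨s, hs, hxs⟩ := hx
    obtain ⟨ξ, hξ⟩ := ih s hs hxs
    exact ⟨ξ, hξ.trans (subset_sUnion_of_mem hs)⟩

theorem t1Space_bt (hκ : ℵ₀ ≤ κ) : @T1Space (Sp κ A) (bt κ A) := by
  let := bt κ A
  have := Cardinal.noMaxOrder hκ
  refine t1Space_iff_exists_open.2 fun x y hxy => ?_
  obtain ⟨β, hβ⟩ := Function.ne_iff.1 hxy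
  obtain ⟨ξ, hξ⟩ := exists_gt β
  exact ⟨cyl κ A x ξ, cyl_openK x ξ, mem_cyl_self x ξ, fun hy => hβ (hy β hξ).symm⟩

theorem interior_singleton_eq_empty [Nontrivial A] (hκ : ℵ₀ ≤ κ) (x : Sp κ A) :
    @interior _ (bt κ A) {x} = ∅ := by
  let := bt κ A
  refine eq_empty_of_forall_notMem fun y hy => ?_
  obtain rfl : y = x := mem_singleton_iff.1 (interior_subset hy)
  obtain ⟨ξ, hξ⟩ := OpenK.exists_cyl_subset hκ isOpen_interior hy
  obtain ⟨a, ha⟩ := exists_ne (y ξ)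
  have hupdate : Function.update y ξ a ∈ cyl κ A y ξ := fun β hβ =>
    Function.update_of_ne hβ.ne _ _
  have := congrFun (mem_singleton_iff.1 (interior_subset (hξ hupdate))) ξ
  rw [Function.update_self] at this
  exact ha this

theorem nwdK_singleton [Nontrivial A] (hκ : ℵ₀ ≤ κ) (x : Sp κ A) : NwdK κ A {x} := by
  let := bt κ A
  have := t1Space_bt (A := A) hκ
  exact isClosed_singleton.isNowhereDense_iff.2 (interior_singleton_eq_empty hκ x)

theorem meagreK_singleton [Nontrivial A] (hκ : ℵ₀ ≤ κ) (x : Sp κ A) : MeagreK κ A {x} := by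
  have := nonempty_I hκ
  exact ⟨fun _ => {x}, fun _ => nwdK_singleton hκ x, (iUnion_const _).symm⟩

theorem exists_meagreK_cover_mk_eq_covM [Nontrivial A] (hκ : ℵ₀ ≤ κ) :
    ∃ 𝒜 : Set (Set (Sp κ A)), #𝒜 = covM κ A ∧ (∀ s ∈ 𝒜, MeagreK κ A s) ∧ ⋃₀ 𝒜 = Set.univ :=
  csInf_mem (s := {c | ∃ 𝒜 : Set (Set (Sp κ A)), #𝒜 = c ∧ (∀ s ∈ 𝒜, MeagreK κ A s) ∧
    ⋃₀ 𝒜 = Set.univ}) ⟨_, range fun x : Sp κ A => {x}, rfl,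
    forall_mem_range.2 (meagreK_singleton hκ), sUnion_eq_univ_iff.2 fun x => ⟨{x}, ⟨x, rfl⟩, rfl⟩⟩

theorem stmt1_general (κ lam : Cardinal.{0}) (hk : Cardinal.aleph0 < κ)
    (hlam : lam.IsRegular)
    (L : Set (Sp κ Bool)) (hL1 : lam ≤ #L)
    (hL2 : ∀ X, MeagreK κ Bool X → #↥(L ∩ X) < lam) :
    #L ≤ covM κ Bool := by
  obtain ⟨𝒜, hcard, hmeagre, hcover⟩ := exists_meagreK_cover_mk_eq_covM (A := Bool) hk.le
  rw [← hcard]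
  refine mk_le_mk_of_subset_iUnion_of_mk_inter_lt hlam hL1 (fun s : 𝒜 => (s : Set (Sp κ Bool)))
    ?_ fun s => hL2 _ (hmeagre s s.2)
  rw [← sUnion_eq_iUnion, hcover]
  exact subset_univ L

theorem stmt1 (κ lam : Cardinal.{0}) (hk : Cardinal.aleph0 < κ) (hreg : κ.IsRegular) (hpow : κ ^< κ = κ)
    (hlam : lam.IsRegular) (hkl : κ < lam) (hl2 : lam ≤ 2 ^ κ)
    (L : Set (Sp κ Bool)) (hL1 : lam ≤ #L)
    (hL2 : ∀ X, MeagreK κ Bool X → #↥(L ∩ X) < lam) :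
    #L ≤ covM κ Bool :=
  stmt1_general κ lam hk hlam L hL1 hL2

end GenSp
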